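/- arXiv:0810.2834 — 3 statements merged into one kernel-verified Lean document; each statement's English description precedes it below -/
import Mathlib

section
/- Let q be a prime power with q > 2. Every permutation of the finite field F_q can be written as a composition of permutations of F_q induced by the polynomial x^(q-2) and by linear polynomials a*x + b over F_q (with a nonzero). Equivalently, the subgroup of the symmetric group on F_q generated by the map x ↦ x^(q-2) together with all maps x ↦ a*x + b with a ∈ F_q^*, b ∈ F_q, is the full symmetric group on F_q. -/
/-!
On a field, `x ↦ x ^ (q - 2)` is inversion (for `q > 2`, so that `0 ↦ 0`). Composed with the
affine map `x ↦ 1 - x` it gives `T x = 1 - x⁻¹`, which swaps `0` and `1` and acts on the other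
elements as a Möbius transformation of order three; hence `T³` is the transposition `(0 1)`.
Conjugating `(0 1)` by the affine map sending `0, 1` to `c, d` yields every transposition,
and transpositions generate the symmetric group.
-/

open Equiv

theorem FiniteField.pow_card_sub_two_eq_inv {F : Type*} [Field F] [Fintype F]
    (hF : 2 < Fintype.card F) (x : F) : x ^ (Fintype.card F - 2) = x⁻¹ := by
  rcases eq_or_ne x 0 with rfl | hx
  · rw [inv_zero, zero_pow (by omega)]
  · refine (inv_eq_of_mul_eq_one_right ?_).symm
    rw [← pow_succ', show Fintype.card F - 2 + 1 = Fintype.card F - 1 by omega,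
      FiniteField.pow_card_sub_one_eq_one x hx]

section

variable {F : Type*} [Field F]

def affinePerm (a b : F) (ha : a ≠ 0) : Perm F := (Equiv.mulLeft₀ a ha).trans (Equiv.addRight b)

@[simp]
theorem affinePerm_apply (a b : F) (ha : a ≠ 0) (x : F) : affinePerm a b ha x = a * x + b := rfl

variable [DecidableEq F]

theorem affinePerm_mul_inv_pow_three :
    (affinePerm (-1) 1 (neg_ne_zero.mpr one_ne_zero) * Equiv.inv F) ^ 3 = swap (0 : F) 1 := by
  ext x
  simp only [pow_succ, pow_zero, one_mul, Perm.mul_apply, affinePerm_apply, Equiv.inv_apply,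
    neg_one_mul, neg_add_eq_sub]
  rcases eq_or_ne x 0 with rfl | hx0
  · simp
  rcases eq_or_ne x 1 with rfl | hx1
  · simp
  rw [swap_apply_of_ne_of_ne hx0 hx1]
  field_simp
  ring

theorem Subgroup.eq_top_of_affinePerm_mem_of_swap_mem [Finite F] {H : Subgroup (Perm F)}
    (hA : ∀ a b (ha : a ≠ 0), affinePerm a b ha ∈ H) (hswap : swap (0 : F) 1 ∈ H) :
    H = ⊤ := by
  rw [eq_top_iff, ← Perm.closure_isSwap, Subgroup.closure_le]
  rintro _ ⟨c, d, hcd, rfl⟩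
  have hdc : d - c ≠ 0 := sub_ne_zero.mpr hcd.symm
  have hconj := swap_apply_apply (affinePerm (d - c) c hdc) 0 1
  simp only [affinePerm_apply, mul_zero, zero_add, mul_one, sub_add_cancel] at hconj
  rw [hconj]
  exact mul_mem (mul_mem (hA _ _ _) hswap) (inv_mem (hA _ _ _))

end

/-- **Carlitz's theorem.** For a finite field `F` with more than two elements,
the symmetric group on `F` is generated by the permutation induced by
`x ↦ x ^ (q - 2)` (where `q` is the cardinality of `F`) together with the
permutations induced by linear polynomials `x ↦ a * x + b` with `a ≠ 0`. -/
theorem carlitz_generators (F : Type*) [Field F] [Fintype F]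
    (hF : 2 < Fintype.card F) :
    Subgroup.closure
      {π : Equiv.Perm F |
        (∀ x : F, π x = x ^ (Fintype.card F - 2)) ∨
        ∃ a b : F, a ≠ 0 ∧ ∀ x : F, π x = a * x + b} = ⊤ := by
  classical
  refine Subgroup.eq_top_of_affinePerm_mem_of_swap_mem
    (fun a b ha => Subgroup.subset_closure (Or.inr ⟨a, b, ha, fun _ => rfl⟩)) ?_
  rw [← affinePerm_mul_inv_pow_three]
  refine pow_mem (mul_mem ?_ ?_) 3
  · exact Subgroup.subset_closure (Or.inr ⟨-1, 1, by norm_num, fun _ => rfl⟩)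
  · exact Subgroup.subset_closure (Or.inl fun x => (FiniteField.pow_card_sub_two_eq_inv hF x).symm)
end

section
/- Let q be a prime power with q > 2, let h(x) := 1 - x^(q-2) over F_q, let g(x) := h(h(h(x))), and let a be a nonzero element of F_q. Then the map x ↦ a * g(x/a) induces on F_q the transposition (0 a): it sends 0 to a, sends a to 0, and fixes every other element of F_q. -/
/-!
On `F_q` with `q > 2` we have `x ^ (q - 2) = x⁻¹` for every `x` (with `0⁻¹ = 0`), so `h` is
`x ↦ 1 - x⁻¹`. As a Möbius map this has order three and cycles `0 ↦ ∞ ↦ 1 ↦ 0`; since `0⁻¹ = 0`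
replaces `∞` by `0`, the cube `g` is the identity off `{0, 1}` and swaps `0` and `1`. Conjugating
by `x ↦ a * x` turns the transposition `(0 1)` into `(0 a)`.
-/

open Equiv

theorem one_sub_inv_one_sub_inv_one_sub_inv {K : Type*} [Field K] [DecidableEq K] (x : K) :
    1 - (1 - (1 - x⁻¹)⁻¹)⁻¹ = swap 0 1 x := by
  rcases eq_or_ne x 0 with rfl | hx0
  · simp
  rcases eq_or_ne x 1 with rfl | hx1
  · simp
  rw [swap_apply_of_ne_of_ne hx0 hx1]
  field_simp
  ring

theorem mul_swap_zero_one_div {K : Type*} [Field K] [DecidableEq K] {a : K} (ha : a ≠ 0) (x : K) :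
    a * swap 0 1 (x / a) = swap 0 a x := by
  simpa [div_eq_inv_mul] using
    (congrArg (· x) (swap_apply_apply (Equiv.mulLeft₀ a ha) 0 1)).symm

/-- For a finite field `F` with `q > 2` elements, let `h(x) = 1 - x^(q-2)`,
`g(x) = h(h(h(x)))`, and let `a ∈ F` be nonzero. Then the map
`x ↦ a * g(x / a)` induces the transposition `(0 a)` on `F`: it sends `0` to
`a`, `a` to `0`, and fixes every other element. -/
theorem carlitz_scaled_transposition (F : Type*) [Field F] [Fintype F]
    (hF : 2 < Fintype.card F) (a : F) (ha : a ≠ 0) (h g φ : F → F)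
    (hh : ∀ x : F, h x = 1 - x ^ (Fintype.card F - 2))
    (hg : ∀ x : F, g x = h (h (h x)))
    (hφ : ∀ x : F, φ x = a * g (x / a)) :
    φ 0 = a ∧ φ a = 0 ∧ ∀ x : F, x ≠ 0 → x ≠ a → φ x = x := by
  classical
  have hφ_swap (x : F) : φ x = swap 0 a x := by
    simp only [hφ, hg, hh, FiniteField.pow_card_sub_two_eq_inv hF,
      one_sub_inv_one_sub_inv_one_sub_inv, mul_swap_zero_one_div ha]
  simp only [hφ_swap, swap_apply_left, swap_apply_right, true_and]
  exact fun x hx0 hxa => swap_apply_of_ne_of_ne hx0 hxa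
end

section
/- Let q be a prime power with q > 2. There exist infinitely many positive integers k such that the map x ↦ x^(q-2) is a permutation of the finite field F_{q^k} (equivalently, such that gcd(q - 2, q^k - 1) = 1). -/
open scoped Nat

theorem pow_bijective_of_coprime_card_sub_one {G₀ : Type*} [GroupWithZero G₀] [Finite G₀]
    {n : ℕ} (hn : n ≠ 0) (h : (Nat.card G₀ - 1).Coprime n) :
    Function.Bijective fun x : G₀ => x ^ n := by
  refine Finite.injective_iff_bijective.1 fun x y hxy => ?_
  obtain rfl | hx := eq_or_ne x 0
  · exact ((pow_eq_zero_iff hn).1 (hxy.symm.trans (zero_pow hn))).symm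
  obtain rfl | hy := eq_or_ne y 0
  · exact (pow_eq_zero_iff hn).1 (hxy.trans (zero_pow hn))
  rw [← Nat.card_units] at h
  have := h.pow_left_bijective.injective (a₁ := Units.mk0 x hx) (a₂ := Units.mk0 y hy)
    (Units.ext (by simpa using hxy))
  simpa using congrArg Units.val this

/-- Modulo a prime `p ∣ q - 2` we have `q = 2`, and `p - 1 ∣ φ (q - 2)`, so Fermat's little
theorem gives `q ^ k = 2 ≠ 1` for `k = 1 + n * φ (q - 2)`. -/
theorem Nat.coprime_sub_two_pow_one_add_mul_totient_sub_one {q : ℕ} (hq : 2 ≤ q) (n : ℕ) :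
    (q - 2).Coprime (q ^ (1 + n * φ (q - 2)) - 1) := by
  refine Nat.coprime_of_dvd fun p hp hpq hpk => ?_
  have := Fact.mk hp
  have hq_eq_two : (q : ZMod p) = 2 := by
    rw [← Nat.sub_add_cancel hq, Nat.cast_add, (ZMod.natCast_eq_zero_iff _ _).2 hpq]
    simp
  have hqk : (q : ZMod p) ^ (1 + n * φ (q - 2)) = 1 := by
    have := (ZMod.natCast_eq_zero_iff _ _).2 hpk
    rwa [Nat.cast_sub (Nat.one_le_pow _ _ (by omega)), sub_eq_zero, Nat.cast_pow,
      Nat.cast_one] at this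
  rw [hq_eq_two] at hqk
  have h2 : (2 : ZMod p) ≠ 0 := by
    rintro h
    simp [h] at hqk
  obtain ⟨c, hc⟩ : p - 1 ∣ φ (q - 2) := by
    simpa [Nat.totient_prime hp] using Nat.totient_dvd_of_dvd hpq
  rw [pow_add, pow_one, hc, mul_left_comm, pow_mul, ZMod.pow_card_sub_one_eq_one h2, one_pow,
    mul_one, ← one_add_one_eq_two, add_eq_left] at hqk
  exact one_ne_zero hqk

theorem infinitely_many_extensions_permuted_general (q : ℕ)
    (hq2 : 2 < q) :
    {k : ℕ | 0 < k ∧ Nat.gcd (q - 2) (q ^ k - 1) = 1 ∧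
      ∀ (K : Type) [Field K] [Fintype K], Fintype.card K = q ^ k →
        Function.Bijective (fun x : K => x ^ (q - 2))}.Infinite := by
  have htot : 0 < φ (q - 2) := Nat.totient_pos.2 (by omega)
  refine Set.infinite_of_injective_forall_mem (f := fun n => 1 + n * φ (q - 2))
    (fun a b hab => ?_) fun n => ?_
  · simpa [htot.ne'] using hab
  have hcop := Nat.coprime_sub_two_pow_one_add_mul_totient_sub_one hq2.le n
  refine ⟨by omega, hcop, fun K _ _ hK => ?_⟩
  refine pow_bijective_of_coprime_card_sub_one (by omega) ?_
  rwa [Nat.card_eq_fintype_card, hK, Nat.coprime_comm]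

/-- Let `q` be a prime power with `q > 2`. There are infinitely many positive
integers `k` such that `gcd(q - 2, q^k - 1) = 1`, equivalently such that the
map `x ↦ x^(q-2)` is a permutation of the finite field with `q^k` elements. -/
theorem infinitely_many_extensions_permuted (q : ℕ) (hq : IsPrimePow q)
    (hq2 : 2 < q) :
    {k : ℕ | 0 < k ∧ Nat.gcd (q - 2) (q ^ k - 1) = 1 ∧
      ∀ (K : Type) [Field K] [Fintype K], Fintype.card K = q ^ k →
        Function.Bijective (fun x : K => x ^ (q - 2))}.Infinite :=
  infinitely_many_extensions_permuted_general q hq2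
end
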